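/- Let d ≥ 1, N ≥ 1, A > 0, and let K : ℝ^d \ {0} → ℂ be N times continuously differentiable with |∂^γ K(x)| ≤ A · |x|^{−1−|γ|} for all x ≠ 0 and all multi-indices γ with |γ| ≤ N. Let b be an integrable function supported in an axis-parallel cube q with center x_q and side-length l, satisfying the moment conditions ∫ b(y) y^α dy = 0 for all multi-indices α with |α| ≤ N − 1. Then there is a constant C = C(d, N) such that for every x with |x − x_q| ≥ 2√d · l one has |∫ K(x − y) b(y) dy| ≤ C · A · l^N · |x − x_q|^{−N−1} · ∫ |b(y)| dy. -/

import Mathlib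

/-!
Taylor-expand `K (x - y)` to order `N - 1` around `y = xq`, along the segment from `x - xq` to
`x - y`. Each Taylor term `D^k K (x - xq) (xq - y, …, xq - y)` is a polynomial of degree `k < N`
in `y`, so it integrates to zero against `b` by the moment conditions. What remains is the
Lagrange remainder, at most `‖D^N K‖ ‖xq - y‖^N / (N - 1)!` on the segment. On the cube
`‖xq - y‖ ≤ √d l / 2 ≤ ‖x - xq‖ / 4`, so the segment stays at distance at least `3/4 ‖x - xq‖`
from the origin, and there `‖D^N K‖ ≤ A (3/4 ‖x - xq‖)^(-N-1)`.
-/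

open MeasureTheory Real

def axisCube {d : ℕ} (c : EuclideanSpace ℝ (Fin d)) (l : ℝ) :
    Set (EuclideanSpace ℝ (Fin d)) :=
  {x | ∀ i, |x i - c i| ≤ l / 2}

open Set

theorem iteratedDerivWithin_comp_lineMap {E F : Type*} [NormedAddCommGroup E] [NormedSpace ℝ E]
    [NormedAddCommGroup F] [NormedSpace ℝ F] {n : ℕ} {f : E → F} {s : Set E} {u : Set ℝ}
    (hs : UniqueDiffOn ℝ s) (hu : UniqueDiffOn ℝ u) (hf : ContDiffOn ℝ n f s) {a b : E}
    (hab : MapsTo (ContinuousAffineMap.lineMap (R := ℝ) a b) u s) {k : ℕ} (hk : k ≤ n) {t : ℝ}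
    (ht : t ∈ u) :
    iteratedDerivWithin k (f ∘ ContinuousAffineMap.lineMap a b) u t =
      iteratedFDerivWithin ℝ k f s (ContinuousAffineMap.lineMap a b t) (fun _ => b - a) := by
  have h := ((hf.ftaylorSeriesWithin hs).comp_continuousAffineMap
    (ContinuousAffineMap.lineMap a b)).mono hab
  rw [iteratedDerivWithin, ← h.eq_iteratedFDerivWithin_of_uniqueDiffOn (mod_cast hk) hu ht]
  simp [ftaylorSeriesWithin]

open Nat in
theorem norm_sub_taylor_le_of_segment_subset {E F : Type*} [NormedAddCommGroup E]
    [NormedSpace ℝ E] [NormedAddCommGroup F] [NormedSpace ℝ F] {n : ℕ} {f : E → F} {s : Set E}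
    (hs : UniqueDiffOn ℝ s) (hf : ContDiffOn ℝ (n + 1) f s) {a b : E} (hab : segment ℝ a b ⊆ s)
    {C : ℝ} (hC : ∀ p ∈ segment ℝ a b, ‖iteratedFDerivWithin ℝ (n + 1) f s p‖ ≤ C) :
    ‖f b - ∑ k ∈ Finset.range (n + 1),
        (k ! : ℝ)⁻¹ • iteratedFDerivWithin ℝ k f s a (fun _ => b - a)‖ ≤
      C * ‖b - a‖ ^ (n + 1) / n ! := by
  set γ := ContinuousAffineMap.lineMap (R := ℝ) a b
  have hγ : ∀ t, γ t = AffineMap.lineMap a b t := fun _ => rfl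
  have hγ_seg : MapsTo γ (Icc 0 1) (segment ℝ a b) := by
    rw [segment_eq_image_lineMap]
    exact fun t ht => ⟨t, ht, rfl⟩
  have hg_deriv : ∀ k ≤ n + 1, ∀ t ∈ Icc (0 : ℝ) 1, iteratedDerivWithin k (f ∘ γ) (Icc 0 1) t =
      iteratedFDerivWithin ℝ k f s (γ t) (fun _ => b - a) := fun k hk t ht =>
    iteratedDerivWithin_comp_lineMap hs (uniqueDiffOn_Icc zero_lt_one) (mod_cast hf)
      (hγ_seg.mono_right hab) hk ht
  have hg_bound : ∀ t ∈ Icc (0 : ℝ) 1,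
      ‖iteratedDerivWithin (n + 1) (f ∘ γ) (Icc 0 1) t‖ ≤ C * ‖b - a‖ ^ (n + 1) := by
    intro t ht
    rw [hg_deriv _ le_rfl t ht]
    refine (ContinuousMultilinearMap.le_opNorm _ _).trans ?_
    simp only [Finset.prod_const, Finset.card_univ, Fintype.card_fin]
    gcongr
    exact hC _ (hγ_seg ht)
  have := taylor_mean_remainder_bound zero_le_one
    (hf.comp γ.contDiff.contDiffOn (hγ_seg.mono_right hab)) (right_mem_Icc.2 zero_le_one)
    hg_bound
  rw [taylor_within_apply, Finset.sum_congr rfl fun k hk =>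
    by rw [hg_deriv k (Finset.mem_range.1 hk).le 0 (left_mem_Icc.2 zero_le_one)]] at this
  simpa [hγ] using this

theorem MeasureTheory.Integrable.mul_continuousOn_of_support_subset {X R : Type*}
    [TopologicalSpace X] [T2Space X] [MeasurableSpace X] [OpensMeasurableSpace X]
    {μ : Measure X} [NormedRing R] [SecondCountableTopologyEither X R] {g g' : X → R}
    {K : Set X} (hg : Integrable g μ) (hK : IsCompact K) (hgK : Function.support g ⊆ K)
    (hg' : ContinuousOn g' K) : Integrable (fun x => g x * g' x) μ :=
  (integrableOn_iff_integrable_of_support_subset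
    ((Function.support_mul_subset_left _ _).trans hgK)).1 (hg.integrableOn.mul_continuousOn hg' hK)

theorem norm_integral_mul_le_of_integral_mul_eq_zero {X : Type*} [MeasurableSpace X]
    {μ : Measure X} {f g b : X → ℂ} {M : ℝ} (hb : Integrable b μ)
    (hf : Integrable (fun y => f y * b y) μ) (hg : Integrable (fun y => g y * b y) μ)
    (hgb : ∫ y, g y * b y ∂μ = 0) (hM : ∀ y ∈ Function.support b, ‖f y - g y‖ ≤ M) :
    ‖∫ y, f y * b y ∂μ‖ ≤ M * ∫ y, ‖b y‖ ∂μ := by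
  have hfg : ∫ y, f y * b y ∂μ = ∫ y, (f y - g y) * b y ∂μ := by
    simp_rw [sub_mul]
    rw [integral_sub hf hg, hgb, sub_zero]
  rw [hfg, ← integral_const_mul]
  refine norm_integral_le_of_norm_le (hb.norm.const_mul M) (ae_of_all _ fun y => ?_)
  by_cases hy : b y = 0
  · simp [hy]
  · rw [norm_mul]
    exact mul_le_mul_of_nonneg_right (hM y hy) (norm_nonneg _)

section Moments

variable {d : ℕ}

theorem exists_mvPolynomial_eval_eq_multilinear {k : ℕ}
    (T : MultilinearMap ℝ (fun _ : Fin k => EuclideanSpace ℝ (Fin d)) ℂ)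
    (c : EuclideanSpace ℝ (Fin d)) :
    ∃ p : MvPolynomial (Fin d) ℂ, p.totalDegree ≤ k ∧
      ∀ y : EuclideanSpace ℝ (Fin d),
        T (fun _ => c - y) = MvPolynomial.eval (fun i => (y i : ℂ)) p := by
  open MvPolynomial in
  -- expand `c - y` in the standard basis and use multilinearity
  refine ⟨∑ r : Fin k → Fin d, C (T fun m => EuclideanSpace.single (r m) 1) *
    ∏ m, (C (c (r m) : ℂ) - X (r m)), ?_, fun y => ?_⟩
  · refine (totalDegree_finsetSum _ _).trans (Finset.sup_le fun r _ => ?_)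
    refine (totalDegree_mul _ _).trans ?_
    rw [totalDegree_C, zero_add]
    refine (totalDegree_finsetProd _ _).trans ?_
    calc _ ≤ ∑ _m : Fin k, 1 :=
          Finset.sum_le_sum fun m _ => (totalDegree_sub _ _).trans (by simp)
      _ = k := by simp
  · have hv : c - y = ∑ i, (c - y) i • EuclideanSpace.single i (1 : ℝ) := by
      simpa using ((EuclideanSpace.basisFun (Fin d) ℝ).sum_repr (c - y)).symm
    rw [hv, T.map_sum]
    simp [T.map_smul_univ, Complex.real_smul, mul_comm]

variable {n : ℕ} {b : EuclideanSpace ℝ (Fin d) → ℂ} {s : Set (EuclideanSpace ℝ (Fin d))}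

theorem integral_mul_eval_eq_zero_of_moments (hb : Integrable b) (hs : IsCompact s)
    (hbs : Function.support b ⊆ s)
    (hmom : ∀ α : Fin d → ℕ, ∑ i, α i ≤ n → ∫ y, b y * ∏ i, (y i : ℂ) ^ α i = 0)
    {p : MvPolynomial (Fin d) ℂ} (hp : p.totalDegree ≤ n) :
    ∫ y, b y * MvPolynomial.eval (fun i => (y i : ℂ)) p = 0 := by
  have hmonomial : ∀ α : Fin d →₀ ℕ, ∀ y : EuclideanSpace ℝ (Fin d),
      MvPolynomial.eval (fun i => (y i : ℂ)) (MvPolynomial.monomial α (p.coeff α)) =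
        p.coeff α * ∏ i, (y i : ℂ) ^ α i := fun α y => by
    rw [MvPolynomial.eval_monomial, Finsupp.prod_fintype _ _ fun _ => pow_zero _]
  conv_lhs => rw [p.as_sum]
  simp only [map_sum, hmonomial, Finset.mul_sum]
  rw [integral_finsetSum _ fun α _ => hb.mul_continuousOn_of_support_subset hs hbs
    (by fun_prop)]
  refine Finset.sum_eq_zero fun α hα => ?_
  simp_rw [mul_left_comm (b _), integral_const_mul]
  rw [hmom α ?_, mul_zero]
  simpa [Finsupp.sum_fintype] using (p.le_totalDegree hα).trans hp

theorem integral_mul_multilinear_eq_zero_of_moments (hb : Integrable b) (hs : IsCompact s)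
    (hbs : Function.support b ⊆ s)
    (hmom : ∀ α : Fin d → ℕ, ∑ i, α i ≤ n → ∫ y, b y * ∏ i, (y i : ℂ) ^ α i = 0)
    {k : ℕ} (hk : k ≤ n)
    (T : MultilinearMap ℝ (fun _ : Fin k => EuclideanSpace ℝ (Fin d)) ℂ)
    (c : EuclideanSpace ℝ (Fin d)) :
    ∫ y, b y * T (fun _ => c - y) = 0 := by
  obtain ⟨p, hp, hTp⟩ := exists_mvPolynomial_eval_eq_multilinear T c
  simp_rw [hTp]
  exact integral_mul_eval_eq_zero_of_moments hb hs hbs hmom (hp.trans hk)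

end Moments

section AxisCube

variable {d : ℕ}

theorem norm_sub_le_of_mem_axisCube {c y : EuclideanSpace ℝ (Fin d)} {l : ℝ} (hl : 0 ≤ l)
    (hy : y ∈ axisCube c l) : ‖c - y‖ ≤ √d * (l / 2) :=
  calc ‖c - y‖ ≤ √(∑ _i : Fin d, (l / 2) ^ 2) := by
        rw [EuclideanSpace.norm_eq]
        gcongr with i
        simpa [Real.norm_eq_abs, abs_sub_comm] using hy i
    _ = √d * (l / 2) := by
        rw [Finset.sum_const, Finset.card_univ, Fintype.card_fin, nsmul_eq_mul,
          Real.sqrt_mul (Nat.cast_nonneg d), Real.sqrt_sq (by positivity)]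

theorem isCompact_axisCube (c : EuclideanSpace ℝ (Fin d)) {l : ℝ} (hl : 0 ≤ l) :
    IsCompact (axisCube c l) := by
  refine Metric.isCompact_of_isClosed_isBounded ?_ ?_
  · simp only [axisCube, ofPred_forall]
    exact isClosed_iInter fun i => isClosed_le (by fun_prop) continuous_const
  · refine (Metric.isBounded_closedBall (x := c) (r := √d * (l / 2))).subset fun y hy => ?_
    rw [Metric.mem_closedBall, dist_comm, dist_eq_norm]
    exact norm_sub_le_of_mem_axisCube hl hy

theorem three_div_four_mul_norm_le_of_mem_segment {c x y p : EuclideanSpace ℝ (Fin d)} {l : ℝ}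
    (hl : 0 ≤ l) (hx : 2 * √d * l ≤ ‖x - c‖) (hy : y ∈ axisCube c l)
    (hp : p ∈ segment ℝ (x - c) (x - y)) : 3 / 4 * ‖x - c‖ ≤ ‖p‖ := by
  have hpc : ‖p - (x - c)‖ ≤ ‖x - c‖ / 4 :=
    calc ‖p - (x - c)‖ ≤ ‖(x - c) - (x - y)‖ := by
          simpa [dist_eq_norm] using segment_subset_closedBall_left _ _ hp
      _ = ‖c - y‖ := by rw [sub_sub_sub_cancel_left, norm_sub_rev]
      _ ≤ √d * (l / 2) := norm_sub_le_of_mem_axisCube hl hy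
      _ ≤ ‖x - c‖ / 4 := by linarith
  linarith [norm_sub_norm_le (x - c) p, norm_sub_rev (x - c) p]

end AxisCube

open Nat in
theorem norm_integral_mul_le_of_taylor {E : Type*} [NormedAddCommGroup E] [NormedSpace ℝ E]
    [MeasurableSpace E] [OpensMeasurableSpace E] {μ : Measure E} {n : ℕ} {K : E → ℂ}
    {s : Set E} (hs : UniqueDiffOn ℝ s) (hK : ContDiffOn ℝ (n + 1) K s) {b : E → ℂ} {Q : Set E}
    (hb : Integrable b μ) (hQ : IsCompact Q) (hbQ : Function.support b ⊆ Q) {c x : E}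
    (hmom : ∀ k ≤ n, ∫ y, b y * iteratedFDerivWithin ℝ k K s (x - c) (fun _ => c - y) ∂μ = 0)
    (hseg : ∀ y ∈ Q, segment ℝ (x - c) (x - y) ⊆ s) {C r : ℝ}
    (hC : ∀ y ∈ Q, ∀ p ∈ segment ℝ (x - c) (x - y),
      ‖iteratedFDerivWithin ℝ (n + 1) K s p‖ ≤ C)
    (hr : ∀ y ∈ Q, ‖c - y‖ ≤ r) :
    ‖∫ y, K (x - y) * b y ∂μ‖ ≤ C * r ^ (n + 1) / n ! * ∫ y, ‖b y‖ ∂μ := by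
  set P : E → ℂ := fun y => ∑ k ∈ Finset.range (n + 1),
    (k ! : ℝ)⁻¹ • iteratedFDerivWithin ℝ k K s (x - c) (fun _ => c - y)
  have hP_mul : ∀ y, P y * b y = ∑ k ∈ Finset.range (n + 1),
      (k ! : ℝ)⁻¹ • (b y * iteratedFDerivWithin ℝ k K s (x - c) (fun _ => c - y)) := fun y => by
    simp only [P, Finset.sum_mul, smul_mul_assoc]
    simp only [mul_comm _ (b y)]
  have hterm_int : ∀ k : ℕ,
      Integrable (fun y => b y * iteratedFDerivWithin ℝ k K s (x - c) (fun _ => c - y)) μ :=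
    fun k => hb.mul_continuousOn_of_support_subset hQ hbQ (by fun_prop)
  refine norm_integral_mul_le_of_integral_mul_eq_zero (g := P) hb ?_ ?_ ?_ fun y hy => ?_
  · refine (hb.mul_continuousOn_of_support_subset hQ hbQ ?_).congr
      (ae_of_all _ fun y => mul_comm _ _)
    exact hK.continuousOn.comp (by fun_prop) fun y hy => hseg y hy (right_mem_segment ℝ _ _)
  · simp_rw [hP_mul]
    exact integrable_finsetSum _ fun k _ => (hterm_int k).fun_smul _
  · simp_rw [hP_mul]
    rw [integral_finsetSum _ fun k _ => ?_]
    · refine Finset.sum_eq_zero fun k hk => ?_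
      rw [integral_smul, hmom k (Finset.mem_range_succ_iff.1 hk), smul_zero]
    · exact (hterm_int k).fun_smul _
  · have hyQ := hbQ hy
    have htaylor := norm_sub_taylor_le_of_segment_subset hs hK (hseg y hyQ) (hC y hyQ)
    rw [sub_sub_sub_cancel_left] at htaylor
    refine htaylor.trans ?_
    have hC_nonneg : 0 ≤ C := (norm_nonneg _).trans (hC y hyQ _ (left_mem_segment ℝ _ _))
    gcongr
    exact hr y hyQ

open Nat in
/-- if `K` is `C^N` away from the origin with
`|∂^γ K(x)| ≤ A |x|^{-1-|γ|}` for `|γ| ≤ N`, and `b` is integrable, supported in a cube `q`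
with center `x_q` and side-length `l`, with vanishing moments up to order `N - 1`, then for
`|x - x_q| ≥ 2√d·l` one has
`|∫ K(x-y) b(y) dy| ≤ C A l^N |x - x_q|^{-N-1} ∫ |b|`, with `C = C(d, N)`. -/
theorem kernel_vs_cancellation (d N : ℕ) (hd : 1 ≤ d) (hN : 1 ≤ N) :
    ∃ C : ℝ, 0 < C ∧
      ∀ (A : ℝ), 0 < A →
      ∀ K : EuclideanSpace ℝ (Fin d) → ℂ,
        ContDiffOn ℝ N K {(0 : EuclideanSpace ℝ (Fin d))}ᶜ →
        (∀ n : ℕ, n ≤ N → ∀ x : EuclideanSpace ℝ (Fin d), x ≠ 0 →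
          ‖iteratedFDerivWithin ℝ n K {(0 : EuclideanSpace ℝ (Fin d))}ᶜ x‖ ≤
            A * ‖x‖ ^ (-(1 : ℝ) - n)) →
      ∀ (xq : EuclideanSpace ℝ (Fin d)) (l : ℝ), 0 < l →
      ∀ b : EuclideanSpace ℝ (Fin d) → ℂ, Integrable b →
        Function.support b ⊆ axisCube xq l →
        (∀ α : Fin d → ℕ, (∑ i, α i) ≤ N - 1 →
          ∫ y, b y * (∏ i, (y i : ℂ) ^ α i) = 0) →
      ∀ x : EuclideanSpace ℝ (Fin d), 2 * Real.sqrt d * l ≤ ‖x - xq‖ →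
        ‖∫ y, K (x - y) * b y‖ ≤
          C * A * l ^ N * ‖x - xq‖ ^ (-(N : ℝ) - 1) * ∫ y, ‖b y‖ := by
  obtain ⟨n, rfl⟩ : ∃ n, N = n + 1 := ⟨N - 1, by omega⟩
  have hsqrt_d : 0 < √d := Real.sqrt_pos.2 (by exact_mod_cast hd)
  refine ⟨(4 / 3) ^ (n + 2) * (√d / 2) ^ (n + 1) / n !, by positivity, ?_⟩
  intro A hA K hK hK_bound xq l hl b hb hb_supp hb_mom x hx
  rw [Nat.add_sub_cancel] at hb_mom
  have hz : 0 < ‖x - xq‖ := lt_of_lt_of_le (by positivity) hx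
  have hcube := isCompact_axisCube xq hl.le
  have hseg := fun y (hy : y ∈ axisCube xq l) p (hp : p ∈ segment ℝ (x - xq) (x - y)) =>
    three_div_four_mul_norm_le_of_mem_segment hl.le hx hy hp
  have hsegS : ∀ y ∈ axisCube xq l, segment ℝ (x - xq) (x - y) ⊆ {0}ᶜ := fun y hy p hp =>
    norm_pos_iff.1 ((by positivity : 0 < 3 / 4 * ‖x - xq‖).trans_le (hseg y hy p hp))
  have hexp : -(1 : ℝ) - (n + 1 : ℕ) ≤ 0 := by linarith [(n + 1 : ℕ).cast_nonneg (α := ℝ)]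
  have h34 : (3 / 4 : ℝ) ^ (-(1 : ℝ) - (n + 1 : ℕ)) = (4 / 3) ^ (n + 2) := by
    rw [show -(1 : ℝ) - (n + 1 : ℕ) = -((n + 2 : ℕ) : ℝ) by push_cast; ring,
      Real.rpow_neg (by norm_num), Real.rpow_natCast, ← inv_pow]
    norm_num
  calc ‖∫ y, K (x - y) * b y‖
      ≤ A * (3 / 4 * ‖x - xq‖) ^ (-(1 : ℝ) - (n + 1 : ℕ)) * (√d * (l / 2)) ^ (n + 1) / n ! *
          ∫ y, ‖b y‖ :=
        norm_integral_mul_le_of_taylor isOpen_compl_singleton.uniqueDiffOn (mod_cast hK) hb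
          hcube hb_supp
          (fun k hk => integral_mul_multilinear_eq_zero_of_moments hb hcube hb_supp hb_mom hk _ xq)
          hsegS
          (fun y hy p hp => (hK_bound (n + 1) le_rfl p (hsegS y hy hp)).trans <|
            mul_le_mul_of_nonneg_left
              (Real.rpow_le_rpow_of_nonpos (by positivity) (hseg y hy p hp) hexp) hA.le)
          fun y hy => norm_sub_le_of_mem_axisCube hl.le hy
    _ = _ := by
        rw [Real.mul_rpow (by norm_num) hz.le, h34,
          show -(1 : ℝ) - (n + 1 : ℕ) = -((n + 1 : ℕ) : ℝ) - 1 by ring]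
        ring
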